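/- In the Heisenberg double H(B*) of the dual of the Taft algebra, the left regular action of B on B* satisfies E^m k^n ⇀ (F^a κ^b) = [a choose m]_q ([m]_q!/(q−q⁻¹)^m) q^{−(b+2a)n/2 − m(a+b) + m(m+1)/2} F^{a−m} κ^b. -/

import Mathlib

/-!
STATEMENT 8: In the dual of the Taft algebra, the left regular action
`(x ⇀ β)(y) = β(y x)` satisfies
`E^m k^n ⇀ (F^a κ^b) = [a,m]_q ([m]_q!/(q−q⁻¹)^m) q^{−(b+2a)n/2 − m(a+b) + m(m+1)/2}
  F^{a−m} κ^b` (with `F^{a−m} = 0` when `m > a`; here the gaussian binomial `[a,m]_q`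
vanishes when `m > a`).
-/

open TensorProduct

noncomputable section

/-- The q-integer `[n]_q`. -/
def qint (q : ℂ) (n : ℕ) : ℂ := (q ^ n - q⁻¹ ^ n) / (q - q⁻¹)

/-- The q-factorial. -/
def qfac (q : ℂ) : ℕ → ℂ
  | 0 => 1
  | n + 1 => qint q (n + 1) * qfac q n

/-- Symmetric Gaussian binomial via the q-Pascal recursion. -/
def qbinom (q : ℂ) : ℕ → ℕ → ℂ
  | _, 0 => 1
  | 0, _ + 1 => 0
  | n + 1, k + 1 => q ^ (k + 1) * qbinom q n (k + 1) + q⁻¹ ^ (n - k) * qbinom q n k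

variable {T : Type*} [Ring T] [Algebra ℂ T]

/-- Convolution product on `B*` dual to the comultiplication `Δ`. -/
def dualMulT (Δ : T →ₐ[ℂ] T ⊗[ℂ] T) (α β : Module.Dual ℂ T) : Module.Dual ℂ T :=
  (TensorProduct.lift ((LinearMap.mul ℂ ℂ).compl₁₂ α β)).comp Δ.toLinearMap

/-- Convolution powers in `B*`, with unit the counit. -/
def dualPow (Δ : T →ₐ[ℂ] T ⊗[ℂ] T) (ε0 f : Module.Dual ℂ T) : ℕ → Module.Dual ℂ T
  | 0 => ε0
  | n + 1 => dualMulT Δ f (dualPow Δ ε0 f n)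

/-- Left regular action of `B` on `B*`: `(x ⇀ β)(y) = β (y * x)`. -/
def lactT (x : T) (β : Module.Dual ℂ T) : Module.Dual ℂ T :=
  β.comp (LinearMap.mulRight ℂ x)

/-!
`k` is grouplike and `E` is `(1, k²)`-skew-primitive, so on the convolution algebra `B*` the
operator `k ⇀ ·` is multiplicative and `E ⇀ ·` is a twisted derivation,
`E ⇀ (αβ) = α (E ⇀ β) + (E ⇀ α) (k² ⇀ β)`. On the generators, `k ⇀ F = q⁻¹ F`,
`k ⇀ κ = q^{-1/2} κ`, `E ⇀ F = ε / (q − q⁻¹)` and `E ⇀ κ = 0`. Hence `F^a κ^b` is an eigenvector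
of `k ⇀ ·`, while `E ⇀ ·` sends it to `F^{a-1} κ^b` times
`(1 + q⁻² + ⋯ + q^{2-2a}) q^{-b} / (q − q⁻¹) = q^{1-a} [a]_q q^{-b} / (q − q⁻¹)`.
Iterating `m` times produces the `q`-falling factorial `[a]_q ⋯ [a-m+1]_q = [a choose m]_q [m]_q!`.
-/

section QNumbers

variable (q : ℂ)

lemma qint_zero : qint q 0 = 0 := by simp [qint]

lemma qint_add (m n : ℕ) : qint q (m + n) = q ^ m * qint q n + q⁻¹ ^ n * qint q m := by
  simp only [qint]
  ring

lemma qint_succ (hq : q - q⁻¹ ≠ 0) (n : ℕ) : qint q (n + 1) = q * qint q n + q⁻¹ ^ n := by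
  unfold qint
  rw [← mul_div_assoc, div_add' _ _ _ hq]
  congr 1
  ring

lemma qbinom_zero_right (n : ℕ) : qbinom q n 0 = 1 := by
  cases n <;> rfl

lemma qbinom_succ_succ (n k : ℕ) :
    qbinom q (n + 1) (k + 1) = q ^ (k + 1) * qbinom q n (k + 1) + q⁻¹ ^ (n - k) * qbinom q n k :=
  rfl

lemma qbinom_eq_zero_of_lt : ∀ {n k : ℕ}, n < k → qbinom q n k = 0
  | 0, _ + 1, _ => rfl
  | n + 1, k + 1, h => by
    rw [qbinom_succ_succ, qbinom_eq_zero_of_lt (by omega), qbinom_eq_zero_of_lt (by omega)]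
    ring

lemma qbinom_mul_qint_sub :
    ∀ n k : ℕ, qbinom q n k * qint q (n - k) = qbinom q n (k + 1) * qint q (k + 1)
  | 0, k => by rw [Nat.zero_sub, qint_zero, qbinom_eq_zero_of_lt q (Nat.succ_pos k)]; ring
  | n + 1, 0 => by
    have ih := qbinom_mul_qint_sub n 0
    rw [qbinom_zero_right, Nat.sub_zero, one_mul] at ih
    rw [qbinom_succ_succ, qbinom_zero_right, Nat.sub_zero, Nat.sub_zero, qbinom_zero_right,
      one_mul, add_comm n 1, qint_add, ih]
    ring
  | n + 1, k + 1 => by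
    rcases lt_or_ge k n with hk | hk
    · obtain ⟨j, rfl⟩ := Nat.exists_eq_add_of_lt hk
      have h₁ := qbinom_mul_qint_sub (k + j + 1) k
      have h₂ := qbinom_mul_qint_sub (k + j + 1) (k + 1)
      rw [show k + j + 1 - k = j + 1 by omega] at h₁
      rw [show k + j + 1 - (k + 1) = j by omega] at h₂
      rw [qbinom_succ_succ q (k + j + 1) k, qbinom_succ_succ q (k + j + 1) (k + 1),
        show k + j + 1 + 1 - (k + 1) = j + 1 by omega, show k + j + 1 - k = j + 1 by omega,
        show k + j + 1 - (k + 1) = j by omega]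
      have e₁ := qint_add q (k + 1) (j + 1)
      have e₂ := qint_add q (k + 2) j
      rw [show k + 1 + (j + 1) = k + 2 + j by omega] at e₁
      linear_combination qbinom q (k + j + 1) (k + 1) * (e₂ - e₁)
        + q⁻¹ ^ (j + 1) * h₁ + q ^ (k + 2) * h₂
    · rw [Nat.succ_sub_succ, Nat.sub_eq_zero_of_le hk, qint_zero,
        qbinom_eq_zero_of_lt q (show n + 1 < k + 1 + 1 by omega)]
      ring

end QNumbers

section QSums

open Finset

variable {q : ℂ}

lemma pow_mul_sum_range_inv_sq_pow (hq : q - q⁻¹ ≠ 0) :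
    ∀ k : ℕ, q ^ k * ∑ i ∈ range k, (q⁻¹ ^ 2) ^ i = q * qint q k
  | 0 => by simp [qint_zero]
  | k + 1 => by
    have hq0 : q ≠ 0 := by rintro rfl; simp at hq
    have hk : q ^ k * (q⁻¹ ^ 2) ^ k = q⁻¹ ^ k := by
      rw [← mul_pow, sq, ← mul_assoc, mul_inv_cancel₀ hq0, one_mul]
    rw [sum_range_succ, pow_succ', mul_assoc, mul_add, pow_mul_sum_range_inv_sq_pow hq k, hk,
      qint_succ q hq]

lemma prod_sum_range_inv_sq_pow {ω : ℂ} (hω : q = ω ^ 2) (hq : q - q⁻¹ ≠ 0) (n : ℕ) :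
    ∀ m : ℕ, ∏ j ∈ range m, ∑ i ∈ range (n - j), (q⁻¹ ^ 2) ^ i
      = qbinom q n m * qfac q m * ω ^ ((m * (m + 1) : ℤ) - 2 * m * n)
  | 0 => by simp [qbinom_zero_right, qfac]
  | m + 1 => by
    rw [prod_range_succ, prod_sum_range_inv_sq_pow hω hq n m]
    rcases lt_or_ge m n with h | h
    · have hq0 : q ≠ 0 := by rintro rfl; simp at hq
      have hω0 : ω ≠ 0 := by rintro rfl; simp_all
      obtain ⟨r, rfl⟩ := Nat.exists_eq_add_of_lt h
      have hS : ∑ i ∈ range (m + r + 1 - m), (q⁻¹ ^ 2) ^ i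
          = q * qint q (m + r + 1 - m) * (q ^ (r + 1))⁻¹ := by
        rw [← pow_mul_sum_range_inv_sq_pow hq, show m + r + 1 - m = r + 1 by omega]
        field_simp
      have hexp : ω ^ ((m * (m + 1) : ℤ) - 2 * m * (m + r + 1 : ℕ)) * q * (q ^ (r + 1))⁻¹
          = ω ^ (((m + 1 : ℕ) * ((m + 1 : ℕ) + 1) : ℤ) - 2 * (m + 1 : ℕ) * (m + r + 1 : ℕ)) := by
        rw [hω, ← pow_mul, ← zpow_natCast, ← zpow_natCast, ← zpow_neg, ← zpow_add₀ hω0,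
          ← zpow_add₀ hω0]
        congr 1
        push_cast
        ring
      rw [hS, qfac, ← hexp]
      linear_combination (qfac q m * ω ^ ((m * (m + 1) : ℤ) - 2 * m * (m + r + 1 : ℕ)) * q
        * (q ^ (r + 1))⁻¹) * qbinom_mul_qint_sub q (m + r + 1) m
    · rw [Nat.sub_eq_zero_of_le h, range_zero, sum_empty,
        qbinom_eq_zero_of_lt q (show n < m + 1 by omega)]
      ring

lemma taft_action_coeff_eq {q ω : ℂ} (hω : q = ω ^ 2) (hq : q - q⁻¹ ≠ 0) (m n a b : ℕ) :
    (q⁻¹ ^ a * ω⁻¹ ^ b) ^ n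
        * ∏ j ∈ range m, ((q - q⁻¹)⁻¹ * (∑ i ∈ range (a - j), (q⁻¹ ^ 2) ^ i) * (ω⁻¹ ^ 2) ^ b)
      = qbinom q a m * qfac q m * ((q - q⁻¹) ^ m)⁻¹
          * ω ^ (-(((b : ℤ) + 2 * a) * n) - 2 * m * (a + b) + m * (m + 1) : ℤ) := by
  have hω0 : ω ≠ 0 := by rintro rfl; simp_all
  have hpow : (q⁻¹ ^ a * ω⁻¹ ^ b) ^ n * ((ω⁻¹ ^ 2) ^ b) ^ m
      = ω⁻¹ ^ ((2 * a + b) * n + 2 * m * b) := by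
    rw [hω]
    ring
  rw [prod_mul_distrib, prod_mul_distrib, prod_const, prod_const, card_range,
    prod_sum_range_inv_sq_pow hω hq,
    show (-(((b : ℤ) + 2 * a) * n) - 2 * m * (a + b) + m * (m + 1) : ℤ)
      = ((m * (m + 1) : ℤ) - 2 * m * a) - ((2 * a + b) * n + 2 * m * b : ℕ) by push_cast; ring,
    zpow_sub₀ hω0 _ (((2 * a + b) * n + 2 * m * b : ℕ) : ℤ), zpow_natCast, div_eq_mul_inv,
    ← inv_pow ω, ← hpow]
  ring

end QSums

section RootsOfUnity

open Complex

lemma exp_pi_I_div_eq_exp_two_pi_I_div (p k : ℕ) :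
    exp (Real.pi * I / (k * p)) = exp (2 * Real.pi * I / ((2 * k * p : ℕ) : ℂ)) := by
  congr 1
  push_cast
  field_simp

lemma exp_pi_I_div_two_mul_sq (p : ℕ) :
    exp (Real.pi * I / (2 * p)) ^ 2 = exp (Real.pi * I / p) := by
  rw [← exp_nat_mul]
  congr 1
  field_simp
  ring

lemma exp_pi_I_div_two_mul_pow_four_mul {p : ℕ} (hp : p ≠ 0) :
    exp (Real.pi * I / (2 * p)) ^ (4 * p) = 1 := by
  have := (isPrimitiveRoot_exp (2 * 2 * p) (by omega)).pow_eq_one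
  rw [← exp_pi_I_div_eq_exp_two_pi_I_div p 2] at this
  convert this using 3
  ring

lemma exp_pi_I_div_sub_inv_ne_zero {p : ℕ} (hp : 2 ≤ p) :
    exp (Real.pi * I / p) - (exp (Real.pi * I / p))⁻¹ ≠ 0 := by
  have hprim := isPrimitiveRoot_exp (2 * 1 * p) (by omega)
  rw [← exp_pi_I_div_eq_exp_two_pi_I_div p 1, Nat.cast_one, one_mul] at hprim
  rw [sub_ne_zero]
  intro h
  have h2 : exp (Real.pi * I / p) ^ 2 = 1 := by
    rw [sq]; nth_rewrite 2 [h]; exact mul_inv_cancel₀ (exp_ne_zero _)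
  have := Nat.le_of_dvd two_pos ((hprim.pow_eq_one_iff_dvd 2).mp h2)
  omega

end RootsOfUnity

section RegularAction

open Finset

lemma lactT_apply (x : T) (β : Module.Dual ℂ T) (y : T) : lactT x β y = β (y * x) := rfl

lemma lactT_one (β : Module.Dual ℂ T) : lactT 1 β = β := by
  ext y
  rw [lactT_apply, mul_one]

lemma lactT_mul (x y : T) (β : Module.Dual ℂ T) : lactT (x * y) β = lactT x (lactT y β) := by
  ext z
  simp only [lactT_apply, mul_assoc]

lemma lactT_smul (x : T) (c : ℂ) (β : Module.Dual ℂ T) : lactT x (c • β) = c • lactT x β := rfl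

lemma lactT_algHom (ε : T →ₐ[ℂ] ℂ) (x : T) : lactT x ε.toLinearMap = ε x • ε.toLinearMap := by
  ext y
  simp [lactT_apply, mul_comm]

lemma lactT_pow_of_eq_smul {x : T} {β : Module.Dual ℂ T} {c : ℂ} (h : lactT x β = c • β) :
    ∀ n : ℕ, lactT (x ^ n) β = c ^ n • β
  | 0 => by rw [pow_zero, pow_zero, one_smul, lactT_one]
  | n + 1 => by
    rw [pow_succ, lactT_mul, h, lactT_smul, lactT_pow_of_eq_smul h n, smul_smul, ← pow_succ']

lemma lactT_pow_of_lowering {x : T} {φ : ℕ → Module.Dual ℂ T} {c : ℕ → ℂ}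
    (h : ∀ k, lactT x (φ k) = c k • φ (k - 1)) (n : ℕ) :
    ∀ m : ℕ, lactT (x ^ m) (φ n) = (∏ j ∈ range m, c (n - j)) • φ (n - m)
  | 0 => by rw [pow_zero, lactT_one, prod_range_zero, one_smul, Nat.sub_zero]
  | m + 1 => by
    rw [pow_succ', lactT_mul, lactT_pow_of_lowering h n m, lactT_smul, h, smul_smul,
      prod_range_succ, Nat.sub_sub]

end RegularAction

section Convolution

open TensorProduct

variable (Δ : T →ₐ[ℂ] T ⊗[ℂ] T)

lemma dualMulT_apply (α β : Module.Dual ℂ T) (x : T) :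
    dualMulT Δ α β x = lift ((LinearMap.mul ℂ ℂ).compl₁₂ α β) (Δ x) := rfl

lemma dualMulT_eq_comp_map (α β : Module.Dual ℂ T) :
    dualMulT Δ α β = LinearMap.mul' ℂ ℂ ∘ₗ TensorProduct.map α β ∘ₗ Δ.toLinearMap := by
  have : lift ((LinearMap.mul ℂ ℂ).compl₁₂ α β) = LinearMap.mul' ℂ ℂ ∘ₗ TensorProduct.map α β :=
    TensorProduct.ext' fun _ _ => rfl
  rw [dualMulT, this, LinearMap.comp_assoc]

lemma dualMulT_smul_left (c : ℂ) (α β : Module.Dual ℂ T) :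
    dualMulT Δ (c • α) β = c • dualMulT Δ α β := by
  simp only [dualMulT_eq_comp_map, map_smul_left, LinearMap.smul_comp, LinearMap.comp_smul]

lemma dualMulT_smul_right (c : ℂ) (α β : Module.Dual ℂ T) :
    dualMulT Δ α (c • β) = c • dualMulT Δ α β := by
  simp only [dualMulT_eq_comp_map, map_smul_right, LinearMap.smul_comp, LinearMap.comp_smul]

lemma dualMulT_zero_left (β : Module.Dual ℂ T) : dualMulT Δ 0 β = 0 := by
  simpa using dualMulT_smul_left Δ 0 0 β

lemma dualMulT_zero_right (α : Module.Dual ℂ T) : dualMulT Δ α 0 = 0 := by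
  simpa using dualMulT_smul_right Δ 0 α 0

lemma lift_compl₁₂_mul_tmul (α β : Module.Dual ℂ T) (u v : T) (z : T ⊗[ℂ] T) :
    lift ((LinearMap.mul ℂ ℂ).compl₁₂ α β) (z * u ⊗ₜ[ℂ] v)
      = lift ((LinearMap.mul ℂ ℂ).compl₁₂ (lactT u α) (lactT v β)) z := by
  induction z using TensorProduct.induction_on with
  | zero => simp
  | tmul x y => rw [Algebra.TensorProduct.tmul_mul_tmul]; rfl
  | add z₁ z₂ h₁ h₂ => rw [add_mul, map_add, map_add, h₁, h₂]

lemma lactT_dualMulT_of_grouplike {g : T} (hg : Δ g = g ⊗ₜ[ℂ] g) (α β : Module.Dual ℂ T) :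
    lactT g (dualMulT Δ α β) = dualMulT Δ (lactT g α) (lactT g β) := by
  ext x
  rw [lactT_apply, dualMulT_apply, dualMulT_apply, map_mul, hg, lift_compl₁₂_mul_tmul]

lemma lactT_dualMulT_of_skewPrimitive {e h : T} (he : Δ e = 1 ⊗ₜ[ℂ] e + e ⊗ₜ[ℂ] h)
    (α β : Module.Dual ℂ T) :
    lactT e (dualMulT Δ α β) = dualMulT Δ α (lactT e β) + dualMulT Δ (lactT e α) (lactT h β) := by
  ext x
  rw [LinearMap.add_apply, lactT_apply, dualMulT_apply, dualMulT_apply, dualMulT_apply, map_mul,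
    he, mul_add, map_add, lift_compl₁₂_mul_tmul, lift_compl₁₂_mul_tmul, lactT_one]

lemma dualMulT_counit_left (ε : T →ₐ[ℂ] ℂ)
    (hε : (Algebra.TensorProduct.lid ℂ T).toAlgHom.comp
      ((Algebra.TensorProduct.map ε (AlgHom.id ℂ T)).comp Δ) = AlgHom.id ℂ T)
    (β : Module.Dual ℂ T) :
    dualMulT Δ ε.toLinearMap β = β := by
  have hlift : ∀ z : T ⊗[ℂ] T, lift ((LinearMap.mul ℂ ℂ).compl₁₂ ε.toLinearMap β) z
      = β (Algebra.TensorProduct.lid ℂ T (Algebra.TensorProduct.map ε (AlgHom.id ℂ T) z)) := by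
    intro z
    induction z using TensorProduct.induction_on with
    | zero => simp
    | tmul u v => simp
    | add z₁ z₂ h₁ h₂ => simp only [map_add, h₁, h₂]
  ext x
  rw [dualMulT_apply, hlift]
  exact congrArg β (AlgHom.congr_fun hε x)

end Convolution

section ConvolutionPowers

open Finset TensorProduct

variable {Δ : T →ₐ[ℂ] T ⊗[ℂ] T} {ε₀ f : Module.Dual ℂ T}

lemma lactT_dualPow_of_grouplike {g : T} {c : ℂ} (hg : Δ g = g ⊗ₜ[ℂ] g) (hε : lactT g ε₀ = ε₀)
    (hf : lactT g f = c • f) : ∀ n : ℕ, lactT g (dualPow Δ ε₀ f n) = c ^ n • dualPow Δ ε₀ f n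
  | 0 => by rw [dualPow, hε, pow_zero, one_smul]
  | n + 1 => by
    rw [dualPow, lactT_dualMulT_of_grouplike Δ hg, hf, lactT_dualPow_of_grouplike hg hε hf n,
      dualMulT_smul_left, dualMulT_smul_right, smul_smul, ← pow_succ']

lemma lactT_dualPow_eq_zero {e h : T} (he : Δ e = 1 ⊗ₜ[ℂ] e + e ⊗ₜ[ℂ] h)
    (hε : lactT e ε₀ = 0) (hf : lactT e f = 0) : ∀ n : ℕ, lactT e (dualPow Δ ε₀ f n) = 0
  | 0 => hε
  | n + 1 => by
    rw [dualPow, lactT_dualMulT_of_skewPrimitive Δ he, hf, lactT_dualPow_eq_zero he hε hf n,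
      dualMulT_zero_left, dualMulT_zero_right, add_zero]

lemma lactT_dualPow_of_skewPrimitive {e h : T} {c d : ℂ}
    (he : Δ e = 1 ⊗ₜ[ℂ] e + e ⊗ₜ[ℂ] h) (hunit : ∀ β, dualMulT Δ ε₀ β = β)
    (hε : lactT e ε₀ = 0) (hf : lactT e f = c • ε₀)
    (hh : ∀ n, lactT h (dualPow Δ ε₀ f n) = d ^ n • dualPow Δ ε₀ f n) :
    ∀ n : ℕ, lactT e (dualPow Δ ε₀ f n) = (c * ∑ i ∈ range n, d ^ i) • dualPow Δ ε₀ f (n - 1)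
  | 0 => by rw [dualPow, hε, range_zero, sum_empty, mul_zero, zero_smul]
  | n + 1 => by
    have hlower : (c * ∑ i ∈ range n, d ^ i) • dualMulT Δ f (dualPow Δ ε₀ f (n - 1))
        = (c * ∑ i ∈ range n, d ^ i) • dualPow Δ ε₀ f n := by
      cases n with
      | zero => rw [range_zero, sum_empty, mul_zero, zero_smul, zero_smul]
      | succ n => rfl
    rw [dualPow, lactT_dualMulT_of_skewPrimitive Δ he, hf, hh,
      lactT_dualPow_of_skewPrimitive he hunit hε hf hh n, dualMulT_smul_right, hlower,
      dualMulT_smul_left, dualMulT_smul_right, hunit, smul_smul, ← add_smul, sum_range_succ,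
      Nat.add_sub_cancel]
    congr 1
    ring

variable {f' : Module.Dual ℂ T}

lemma lactT_dualMulT_dualPow_of_grouplike {g : T} {c c' : ℂ} (hg : Δ g = g ⊗ₜ[ℂ] g)
    (hε : lactT g ε₀ = ε₀) (hf : lactT g f = c • f) (hf' : lactT g f' = c' • f') (a b : ℕ) :
    lactT g (dualMulT Δ (dualPow Δ ε₀ f a) (dualPow Δ ε₀ f' b))
      = (c ^ a * c' ^ b) • dualMulT Δ (dualPow Δ ε₀ f a) (dualPow Δ ε₀ f' b) := by
  rw [lactT_dualMulT_of_grouplike Δ hg, lactT_dualPow_of_grouplike hg hε hf,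
    lactT_dualPow_of_grouplike hg hε hf', dualMulT_smul_left, dualMulT_smul_right, smul_smul]

lemma lactT_dualMulT_dualPow_of_skewPrimitive {e h : T} {c d w : ℂ}
    (he : Δ e = 1 ⊗ₜ[ℂ] e + e ⊗ₜ[ℂ] h) (hh : Δ h = h ⊗ₜ[ℂ] h)
    (hunit : ∀ β, dualMulT Δ ε₀ β = β) (heε : lactT e ε₀ = 0) (hhε : lactT h ε₀ = ε₀)
    (hef : lactT e f = c • ε₀) (hef' : lactT e f' = 0)
    (hhf : lactT h f = d • f) (hhf' : lactT h f' = w • f') (a b : ℕ) :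
    lactT e (dualMulT Δ (dualPow Δ ε₀ f a) (dualPow Δ ε₀ f' b))
      = (c * (∑ i ∈ range a, d ^ i) * w ^ b)
          • dualMulT Δ (dualPow Δ ε₀ f (a - 1)) (dualPow Δ ε₀ f' b) := by
  rw [lactT_dualMulT_of_skewPrimitive Δ he, lactT_dualPow_eq_zero he heε hef',
    dualMulT_zero_right, zero_add,
    lactT_dualPow_of_skewPrimitive he hunit heε hef (lactT_dualPow_of_grouplike hh hhε hhf),
    lactT_dualPow_of_grouplike hh hhε hhf', dualMulT_smul_left, dualMulT_smul_right, smul_smul]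

end ConvolutionPowers

section TaftMonomials

variable {p : ℕ} {E K : T} {bas : Module.Basis (Fin p × ZMod (4 * p)) ℂ T}

lemma pow_mul_eq_smul_mul_pow {q : ℂ} (hcomm : K * E = q • (E * K)) :
    ∀ t : ℕ, K ^ t * E = q ^ t • (E * K ^ t)
  | 0 => by rw [pow_zero, pow_zero, one_mul, mul_one, one_smul]
  | t + 1 => by
    rw [pow_succ, mul_assoc, hcomm, mul_smul_comm, ← mul_assoc, pow_mul_eq_smul_mul_pow hcomm t,
      smul_mul_assoc, smul_smul, mul_assoc, ← pow_succ, ← pow_succ']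

lemma monomial_eq_basis (hKord : K ^ (4 * p) = 1)
    (hbas : ∀ mn : Fin p × ZMod (4 * p), bas mn = E ^ (mn.1 : ℕ) * K ^ mn.2.val)
    {s : ℕ} (hs : s < p) (t : ℕ) : E ^ s * K ^ t = bas (⟨s, hs⟩, (t : ZMod (4 * p))) := by
  rw [hbas, ZMod.val_natCast, ← pow_eq_pow_mod t hKord]

lemma ext_of_apply_monomial
    (hbas : ∀ mn : Fin p × ZMod (4 * p), bas mn = E ^ (mn.1 : ℕ) * K ^ mn.2.val)
    {φ ψ : Module.Dual ℂ T} (h : ∀ s < p, ∀ t : ℕ, φ (E ^ s * K ^ t) = ψ (E ^ s * K ^ t)) :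
    φ = ψ :=
  bas.ext fun mn => by rw [hbas]; exact h _ mn.1.isLt _

lemma apply_monomial_of_apply_basis (hEnil : E ^ p = 0) (hKord : K ^ (4 * p) = 1)
    (hbas : ∀ mn : Fin p × ZMod (4 * p), bas mn = E ^ (mn.1 : ℕ) * K ^ mn.2.val)
    {φ : Module.Dual ℂ T} {s₀ : ℕ} {c z : ℂ} (hs₀ : s₀ < p) (hz : z ^ (4 * p) = 1)
    (hφ : ∀ mn : Fin p × ZMod (4 * p),
      φ (bas mn) = if (mn.1 : ℕ) = s₀ then c * z ^ (-(mn.2.val : ℤ)) else 0)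
    (s : ℕ) (hs : s ≤ p) (t : ℕ) :
    φ (E ^ s * K ^ t) = if s = s₀ then c * (z ^ t)⁻¹ else 0 := by
  rcases hs.lt_or_eq with hs | rfl
  · rw [monomial_eq_basis hKord hbas hs, hφ, ZMod.val_natCast, zpow_neg, zpow_natCast,
      ← pow_eq_pow_mod t hz]
  · rw [hEnil, zero_mul, map_zero, if_neg hs₀.ne']

lemma lactT_K_of_apply_monomial
    (hbas : ∀ mn : Fin p × ZMod (4 * p), bas mn = E ^ (mn.1 : ℕ) * K ^ mn.2.val)
    {φ : Module.Dual ℂ T} {s₀ : ℕ} {c z : ℂ}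
    (hφ : ∀ s ≤ p, ∀ t : ℕ, φ (E ^ s * K ^ t) = if s = s₀ then c * (z ^ t)⁻¹ else 0) :
    lactT K φ = z⁻¹ • φ := by
  refine ext_of_apply_monomial hbas fun s hs t => ?_
  rw [lactT_apply, LinearMap.smul_apply, mul_assoc, ← pow_succ, hφ s hs.le, hφ s hs.le,
    smul_eq_mul]
  split_ifs
  · rw [pow_succ, mul_inv]
    ring
  · rw [mul_zero]

lemma lactT_E_of_apply_monomial_one {q c : ℂ} (hcomm : K * E = q • (E * K))
    (hbas : ∀ mn : Fin p × ZMod (4 * p), bas mn = E ^ (mn.1 : ℕ) * K ^ mn.2.val)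
    (hq : q ≠ 0) {φ : Module.Dual ℂ T}
    (hφ : ∀ s ≤ p, ∀ t : ℕ, φ (E ^ s * K ^ t) = if s = 1 then c * (q ^ t)⁻¹ else 0)
    (ε : T →ₐ[ℂ] ℂ) (hεE : ε E = 0) (hεK : ε K = 1) :
    lactT E φ = c • ε.toLinearMap := by
  refine ext_of_apply_monomial hbas fun s hs t => ?_
  rw [lactT_apply, LinearMap.smul_apply, mul_assoc, pow_mul_eq_smul_mul_pow hcomm, mul_smul_comm,
    ← mul_assoc, ← pow_succ, map_smul, hφ (s + 1) hs, AlgHom.toLinearMap_apply, map_mul, map_pow,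
    map_pow, hεE, hεK, one_pow, mul_one, smul_eq_mul, smul_eq_mul]
  rcases s with _ | s
  · rw [if_pos rfl, pow_zero, mul_one, mul_left_comm, mul_inv_cancel₀ (pow_ne_zero t hq),
      mul_one]
  · rw [if_neg (by omega), zero_pow (Nat.succ_ne_zero s), mul_zero, mul_zero]

lemma lactT_E_of_apply_monomial_zero {q c z : ℂ} (hcomm : K * E = q • (E * K))
    (hbas : ∀ mn : Fin p × ZMod (4 * p), bas mn = E ^ (mn.1 : ℕ) * K ^ mn.2.val)
    {φ : Module.Dual ℂ T}
    (hφ : ∀ s ≤ p, ∀ t : ℕ, φ (E ^ s * K ^ t) = if s = 0 then c * (z ^ t)⁻¹ else 0) :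
    lactT E φ = 0 := by
  refine ext_of_apply_monomial hbas fun s hs t => ?_
  rw [lactT_apply, LinearMap.zero_apply, mul_assoc, pow_mul_eq_smul_mul_pow hcomm, mul_smul_comm,
    ← mul_assoc, ← pow_succ, map_smul, hφ (s + 1) hs, if_neg (Nat.succ_ne_zero s), smul_zero]

lemma algHom_ext_of_basis {A : Type*} [Semiring A] [Algebra ℂ A]
    (hbas : ∀ mn : Fin p × ZMod (4 * p), bas mn = E ^ (mn.1 : ℕ) * K ^ mn.2.val)
    {f g : T →ₐ[ℂ] A} (hE : f E = g E) (hK : f K = g K) : f = g :=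
  AlgHom.toLinearMap_injective <| bas.ext fun mn => by
    simp only [AlgHom.toLinearMap_apply, hbas, map_mul, map_pow, hE, hK]

end TaftMonomials

theorem taft_left_regular_action_formula
    (p : ℕ) (hp : 2 ≤ p)
    (q q2 : ℂ)
    (hq : q = Complex.exp (Real.pi * Complex.I / p))
    (hq2 : q2 = Complex.exp (Real.pi * Complex.I / (2 * p)))
    (E K : T)
    (hcomm : K * E = q • (E * K)) (hEnil : E ^ p = 0) (hKord : K ^ (4 * p) = 1)
    (bas : Module.Basis (Fin p × ZMod (4 * p)) ℂ T)
    (hbas : ∀ mn : Fin p × ZMod (4 * p), bas mn = E ^ (mn.1 : ℕ) * K ^ mn.2.val)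
    (Δ : T →ₐ[ℂ] T ⊗[ℂ] T)
    (hΔE : Δ E = 1 ⊗ₜ[ℂ] E + E ⊗ₜ[ℂ] (K * K)) (hΔK : Δ K = K ⊗ₜ[ℂ] K)
    (εa : T →ₐ[ℂ] ℂ) (hεE : εa E = 0) (hεK : εa K = 1)
    (F κ : Module.Dual ℂ T)
    (hF : ∀ mn : Fin p × ZMod (4 * p),
      F (bas mn) = if (mn.1 : ℕ) = 1 then q ^ (-(mn.2.val : ℤ)) / (q - q⁻¹) else 0)
    (hκ : ∀ mn : Fin p × ZMod (4 * p),
      κ (bas mn) = if (mn.1 : ℕ) = 0 then q2 ^ (-(mn.2.val : ℤ)) else 0) :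
    ∀ m n a b : ℕ, m < p → a < p → n < 4 * p → b < 4 * p →
      lactT (E ^ m * K ^ n) (dualMulT Δ (dualPow Δ εa.toLinearMap F a)
          (dualPow Δ εa.toLinearMap κ b))
        = (qbinom q a m * qfac q m * ((q - q⁻¹) ^ m)⁻¹
            * q2 ^ (-(((b : ℤ) + 2 * a) * n) - 2 * m * (a + b) + m * (m + 1) : ℤ)) •
            dualMulT Δ (dualPow Δ εa.toLinearMap F (a - m))
              (dualPow Δ εa.toLinearMap κ b) := by
  intro m n a b _ _ _ _
  have hω : q = q2 ^ 2 := by rw [hq, hq2, exp_pi_I_div_two_mul_sq]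
  have hq2_pow : q2 ^ (4 * p) = 1 := hq2 ▸ exp_pi_I_div_two_mul_pow_four_mul (by omega)
  have hq_pow : q ^ (4 * p) = 1 := by rw [hω, ← pow_mul, mul_comm, pow_mul, hq2_pow, one_pow]
  have hd : q - q⁻¹ ≠ 0 := hq ▸ exp_pi_I_div_sub_inv_ne_zero hp
  have hFmon := apply_monomial_of_apply_basis hEnil hKord hbas (by omega : 1 < p) hq_pow
    fun mn => by rw [hF, div_eq_inv_mul]
  have hκmon := apply_monomial_of_apply_basis hEnil hKord hbas (by omega : 0 < p) hq2_pow
    fun mn => by rw [hκ, one_mul]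
  have hKF := lactT_K_of_apply_monomial hbas hFmon
  have hKκ := lactT_K_of_apply_monomial hbas hκmon
  have hKε : lactT K εa.toLinearMap = εa.toLinearMap := by rw [lactT_algHom, hεK, one_smul]
  have hunit := dualMulT_counit_left Δ εa <| algHom_ext_of_basis hbas
    (by simp [hΔE, hεE]) (by simp [hΔK, hεK])
  have hlower := lactT_dualMulT_dualPow_of_skewPrimitive hΔE
    (by rw [map_mul, hΔK, Algebra.TensorProduct.tmul_mul_tmul]) hunit
    (by rw [lactT_algHom, hεE, zero_smul]) (by rw [lactT_mul, hKε, hKε])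
    (lactT_E_of_apply_monomial_one hcomm hbas (by rintro rfl; simp at hd) hFmon εa hεE hεK)
    (lactT_E_of_apply_monomial_zero hcomm hbas hκmon)
    (by rw [← sq, lactT_pow_of_eq_smul hKF]) (by rw [← sq, lactT_pow_of_eq_smul hKκ])
  rw [lactT_mul, lactT_pow_of_eq_smul (lactT_dualMulT_dualPow_of_grouplike hΔK hKε hKF hKκ a b),
    lactT_smul, lactT_pow_of_lowering (fun k => hlower k b), smul_smul,
    taft_action_coeff_eq hω hd]
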